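/- arXiv:2304.06561 — 3 statements merged into one kernel-verified Lean document; each statement's English description precedes it below -/
import Mathlib

section
/- Let (X,d,m) be a metric measure space, p ∈ (1,∞), and let f, g ∈ L^p(m). Then for every δ > 0 and every ε ∈ (0,1): I_δ(f) ≤ (1−ε)^{−p} · I_{(1−ε)δ}(g) + ε^{−p} · I_{εδ}(f−g), where I_δ(h) = ∬_{{(x,y) : |h(x)−h(y)|>δ}} δ^p / (m(B_{d(x,y)}(x))·d(x,y)^p) dm(y) dm(x). -/
open MeasureTheory Metric Filter Set
open scoped ENNReal Topology NNReal

/-- The functional `I_δ(f) = ∬_{|f(x)-f(y)|>δ} δ^p / (μ(B_{d(x,y)}(x)) d(x,y)^p) dμ(y) dμ(x)`,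
with values in `[0,∞]`. -/
noncomputable def Ifun {X : Type*} [MetricSpace X] [MeasurableSpace X]
    (μ : Measure X) (p δ : ℝ) (f : X → ℝ) : ℝ≥0∞ :=
  ∫⁻ x, ∫⁻ y, Set.indicator {y | |f x - f y| > δ}
    (fun y => ENNReal.ofReal (δ ^ p) /
      (μ (ball x (dist x y)) * ENNReal.ofReal (dist x y ^ p))) y ∂μ ∂μ

/-!
If `|f x - f y| > δ`, then `|g x - g y| > (1 - ε) δ` or `|(f - g) x - (f - g) y| > ε δ`,
since `δ = (1 - ε) δ + ε δ`; and `δ ^ p = (1 - ε) ^ (-p) ((1 - ε) δ) ^ p = ε ^ (-p) (ε δ) ^ p`.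
So the integrand of `I_δ(f)` is pointwise bounded by the corresponding combination of the
integrands of `I_{(1-ε)δ}(g)` and `I_{εδ}(f - g)`. Integrating this bound is legitimate
(Tonelli) once `f` and `g` are replaced by measurable representatives, which does not change
any of the three functionals.
-/

theorem ENNReal.ofReal_rpow_neg_mul_ofReal_mul_rpow {a δ : ℝ} (ha : 0 < a) (hδ : 0 ≤ δ)
    (p : ℝ) :
    ENNReal.ofReal (a ^ (-p)) * ENNReal.ofReal ((a * δ) ^ p) = ENNReal.ofReal (δ ^ p) := by
  rw [← ENNReal.ofReal_mul (by positivity), Real.mul_rpow ha.le hδ, ← mul_assoc,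
    ← Real.rpow_add ha, neg_add_cancel, Real.rpow_zero, one_mul]

theorem lintegral_lintegral_le_const_mul_add_const_mul {α β : Type*} [MeasurableSpace α]
    [MeasurableSpace β] {μ : Measure α} {ν : Measure β} [SFinite ν]
    {K K₁ K₂ : α → β → ℝ≥0∞} (c₁ c₂ : ℝ≥0∞)
    (hK₁ : Measurable (Function.uncurry K₁)) (hK₂ : Measurable (Function.uncurry K₂))
    (hK : ∀ x y, K x y ≤ c₁ * K₁ x y + c₂ * K₂ x y) :
    ∫⁻ x, ∫⁻ y, K x y ∂ν ∂μ ≤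
      c₁ * ∫⁻ x, ∫⁻ y, K₁ x y ∂ν ∂μ + c₂ * ∫⁻ x, ∫⁻ y, K₂ x y ∂ν ∂μ := by
  calc ∫⁻ x, ∫⁻ y, K x y ∂ν ∂μ
      ≤ ∫⁻ x, ∫⁻ y, c₁ * K₁ x y + c₂ * K₂ x y ∂ν ∂μ :=
        lintegral_mono fun x => lintegral_mono (hK x)
    _ = ∫⁻ x, c₁ * ∫⁻ y, K₁ x y ∂ν + c₂ * ∫⁻ y, K₂ x y ∂ν ∂μ := by
        refine lintegral_congr fun x => ?_
        have h₁ : Measurable (K₁ x) := hK₁.comp measurable_prodMk_left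
        have h₂ : Measurable (K₂ x) := hK₂.comp measurable_prodMk_left
        rw [lintegral_add_left (h₁.const_mul c₁), lintegral_const_mul c₁ h₁,
          lintegral_const_mul c₂ h₂]
    _ = _ := by
        have h₁ : Measurable fun x => ∫⁻ y, K₁ x y ∂ν  := hK₁.lintegral_prod_right'
        have h₂ : Measurable fun x => ∫⁻ y, K₂ x y ∂ν  := hK₂.lintegral_prod_right'
        rw [lintegral_add_left (h₁.const_mul c₁), lintegral_const_mul c₁ h₁,
          lintegral_const_mul c₂ h₂]

theorem measurable_measure_ball {X : Type*} [MetricSpace X] [MeasurableSpace X]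
    [OpensMeasurableSpace X] [SecondCountableTopology X] (μ : Measure X) [SFinite μ] :
    Measurable fun q : X × ℝ => μ (ball q.1 q.2) := by
  have hs : MeasurableSet {q : (X × ℝ) × X | dist q.2 q.1.1 < q.1.2} :=
    measurableSet_lt (measurable_snd.dist (measurable_fst.comp measurable_fst))
      (measurable_snd.comp measurable_fst)
  exact measurable_measure_prodMk_left hs

theorem Ifun_congr_ae {X : Type*} [MetricSpace X] [MeasurableSpace X] (μ : Measure X)
    (p δ : ℝ) {f f' : X → ℝ} (h : f =ᵐ[μ] f') : Ifun μ p δ f = Ifun μ p δ f' := by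
  refine lintegral_congr_ae ?_
  filter_upwards [h] with x hx
  refine lintegral_congr_ae ?_
  filter_upwards [h] with y hy
  simp only [Set.indicator_apply, Set.mem_ofPred_eq, hx, hy]

noncomputable def IfunKernel {X : Type*} [MetricSpace X] [MeasurableSpace X]
    (μ : Measure X) (p δ : ℝ) (f : X → ℝ) (x y : X) : ℝ≥0∞ :=
  Set.indicator {y | |f x - f y| > δ}
    (fun y => ENNReal.ofReal (δ ^ p) /
      (μ (ball x (dist x y)) * ENNReal.ofReal (dist x y ^ p))) y

namespace IfunKernel

variable {X : Type*} [MetricSpace X] [MeasurableSpace X] (μ : Measure X) (p : ℝ)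

theorem lintegral_lintegral (δ : ℝ) (f : X → ℝ) :
    ∫⁻ x, ∫⁻ y, IfunKernel μ p δ f x y ∂μ ∂μ = Ifun μ p δ f := rfl

theorem measurable_uncurry [OpensMeasurableSpace X] [SecondCountableTopology X] [SFinite μ]
    (δ : ℝ) {f : X → ℝ} (hf : Measurable f) :
    Measurable (Function.uncurry (IfunKernel μ p δ f)) := by
  have hdenom : Measurable fun q : X × X =>
      μ (ball q.1 (dist q.1 q.2)) * ENNReal.ofReal (dist q.1 q.2 ^ p) :=
    ((measurable_measure_ball μ).comp (measurable_fst.prodMk measurable_dist)).mul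
      (measurable_dist.pow_const p).ennreal_ofReal
  have hset : MeasurableSet {q : X × X | δ < |f q.1 - f q.2|} :=
    measurableSet_lt measurable_const ((hf.comp measurable_fst).sub (hf.comp measurable_snd)).abs
  exact (measurable_const.div hdenom).indicator hset

theorem ofReal_rpow_neg_mul_of_lt {a δ : ℝ} (ha : 0 < a) (hδ : 0 ≤ δ) {g : X → ℝ}
    {x y : X} (h : a * δ < |g x - g y|) :
    ENNReal.ofReal (a ^ (-p)) * IfunKernel μ p (a * δ) g x y =
      ENNReal.ofReal (δ ^ p) / (μ (ball x (dist x y)) * ENNReal.ofReal (dist x y ^ p)) := by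
  rw [IfunKernel, indicator_of_mem (show y ∈ {y | |g x - g y| > a * δ} from h),
    ← mul_div_assoc, ENNReal.ofReal_rpow_neg_mul_ofReal_mul_rpow ha hδ]

theorem le_add {δ ε : ℝ} (hδ : 0 ≤ δ) (hε : ε ∈ Ioo (0 : ℝ) 1) (f g : X → ℝ)
    (x y : X) :
    IfunKernel μ p δ f x y ≤
      ENNReal.ofReal ((1 - ε) ^ (-p)) * IfunKernel μ p ((1 - ε) * δ) g x y +
        ENNReal.ofReal (ε ^ (-p)) * IfunKernel μ p (ε * δ) (f - g) x y := by
  by_cases hf : |f x - f y| > δ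
  · rw [IfunKernel, indicator_of_mem (show y ∈ {y | |f x - f y| > δ} from hf)]
    have htriangle : |f x - f y| ≤ |g x - g y| + |(f - g) x - (f - g) y| := by
      calc |f x - f y| = |(g x - g y) + ((f - g) x - (f - g) y)| := by
            simp only [Pi.sub_apply]; ring_nf
        _ ≤ _ := abs_add_le _ _
    have hsplit : (1 - ε) * δ < |g x - g y| ∨ ε * δ < |(f - g) x - (f - g) y| := by
      by_contra! h
      linarith [h.1, h.2]
    rcases hsplit with hg | hfg
    · exact (ofReal_rpow_neg_mul_of_lt μ p (sub_pos.2 hε.2) hδ hg).ge.trans le_self_add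
    · exact (ofReal_rpow_neg_mul_of_lt μ p hε.1 hδ hfg).ge.trans le_add_self
  · rw [IfunKernel, indicator_of_notMem (show y ∉ {y | |f x - f y| > δ} from hf)]
    exact zero_le

end IfunKernel

theorem Ifun_le_Ifun_add_Ifun_general {X : Type*} [MetricSpace X]
    [TopologicalSpace.SeparableSpace X] [MeasurableSpace X] [BorelSpace X]
    (μ : Measure X) (hballs : ∀ (x : X) (r : ℝ), μ (ball x r) < ∞)
    (p : ℝ)
    (f g : X → ℝ) (hf : MemLp f (ENNReal.ofReal p) μ) (hg : MemLp g (ENNReal.ofReal p) μ)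
    (δ : ℝ) (hδ : 0 < δ) (ε : ℝ) (hε : ε ∈ Set.Ioo (0 : ℝ) 1) :
    Ifun μ p δ f ≤ ENNReal.ofReal ((1 - ε) ^ (-p)) * Ifun μ p ((1 - ε) * δ) g +
      ENNReal.ofReal (ε ^ (-p)) * Ifun μ p (ε * δ) (f - g) := by
  -- `X` is second countable, so this makes `μ` σ-finite, as Tonelli's theorem requires.
  have : IsLocallyFiniteMeasure μ :=
    ⟨fun x => ⟨ball x 1, ball_mem_nhds x one_pos, hballs x 1⟩⟩
  obtain ⟨f', hf'_meas, hff'⟩ := hf.aestronglyMeasurable.aemeasurable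
  obtain ⟨g', hg'_meas, hgg'⟩ := hg.aestronglyMeasurable.aemeasurable
  rw [Ifun_congr_ae μ p δ hff', Ifun_congr_ae μ p _ hgg', Ifun_congr_ae μ p _ (hff'.sub hgg'),
    ← IfunKernel.lintegral_lintegral, ← IfunKernel.lintegral_lintegral,
    ← IfunKernel.lintegral_lintegral]
  exact lintegral_lintegral_le_const_mul_add_const_mul _ _
    (IfunKernel.measurable_uncurry μ p _ hg'_meas)
    (IfunKernel.measurable_uncurry μ p _ (hf'_meas.sub hg'_meas))
    (IfunKernel.le_add μ p hδ.le hε f' g')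

/-- Let `(X,d,m)` be a metric measure space, `p ∈ (1,∞)` and
`f, g ∈ L^p(m)`. Then for every `δ > 0` and `ε ∈ (0,1)`:
`I_δ(f) ≤ (1-ε)^{-p} I_{(1-ε)δ}(g) + ε^{-p} I_{εδ}(f-g)`. -/
theorem Ifun_le_Ifun_add_Ifun {X : Type*} [MetricSpace X] [CompleteSpace X]
    [TopologicalSpace.SeparableSpace X] [MeasurableSpace X] [BorelSpace X]
    (μ : Measure X) (hμ : μ ≠ 0) (hballs : ∀ (x : X) (r : ℝ), μ (ball x r) < ∞)
    (p : ℝ) (hp : 1 < p)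
    (f g : X → ℝ) (hf : MemLp f (ENNReal.ofReal p) μ) (hg : MemLp g (ENNReal.ofReal p) μ)
    (δ : ℝ) (hδ : 0 < δ) (ε : ℝ) (hε : ε ∈ Set.Ioo (0 : ℝ) 1) :
    Ifun μ p δ f ≤ ENNReal.ofReal ((1 - ε) ^ (-p)) * Ifun μ p ((1 - ε) * δ) g +
      ENNReal.ofReal (ε ^ (-p)) * Ifun μ p (ε * δ) (f - g) :=
  Ifun_le_Ifun_add_Ifun_general μ hballs p f g hf hg δ hδ ε hε
end

section
/- Let (X,d,m) be a metric measure space whose measure m is uniformly doubling with constant C_D, let p ∈ (1,∞), and let f : X → ℝ be Lipschitz with Lipschitz constant at most 1. Then there exists a constant C > 0 (depending only on C_D and p) such that for every δ > 0 and every x ∈ X: ∫_X 1_{{|f(x)−f(y)|>δ}}(y) · δ^p / (m(B_{d(x,y)}(x))·d(x,y)^p) dm(y) ≤ C. -/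
/-!
Since `f` is `1`-Lipschitz, the integrand vanishes on `B_δ(x)`. Split the complement into the
dyadic annuli `B_{2^{n+1}δ}(x) \ B_{2^n δ}(x)`. On the `n`-th annulus the integrand is at most
`2^{-np} / m(B_{2^n δ}(x))`, while doubling bounds the measure of the annulus by
`C_D m(B_{2^n δ}(x))`; so the `n`-th piece contributes at most `C_D 2^{-np}`, and these sum to
`C_D / (1 - 2^{-p})`.
-/

open MeasureTheory Metric Filter Set
open scoped ENNReal Topology NNReal

/-- `μ` is uniformly doubling with constant `C`. -/
def IsUniformlyDoubling {X : Type*} [MetricSpace X] [MeasurableSpace X]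
    (μ : Measure X) (C : ℝ≥0) : Prop :=
  ∀ x : X, ∀ r : ℝ, 0 < r → μ (ball x (2 * r)) ≤ (C : ℝ≥0∞) * μ (ball x r)

theorem compl_ball_subset_iUnion_annulus {X : Type*} [PseudoMetricSpace X] (x : X) {r c : ℝ}
    (hr : 0 < r) (hc : 1 < c) :
    (ball x r)ᶜ ⊆ ⋃ n : ℕ, ball x (c ^ (n + 1) * r) \ ball x (c ^ n * r) := by
  intro y hy
  rw [mem_compl_iff, mem_ball, not_lt, ← one_le_div hr] at hy
  obtain ⟨n, hn, hn'⟩ := exists_nat_pow_near hy hc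
  refine mem_iUnion.2 ⟨n, ?_, ?_⟩
  · rwa [mem_ball, ← div_lt_iff₀ hr]
  · rwa [mem_ball, not_lt, ← le_div_iff₀ hr]

namespace IsUniformlyDoubling

variable {X : Type*} [MetricSpace X] [MeasurableSpace X] {μ : Measure X} {C : ℝ≥0}

theorem setLIntegral_annulus_le [OpensMeasurableSpace X] (hμ : IsUniformlyDoubling μ C)
    (x : X) {r δ p : ℝ} (hr : 0 < r) (hδ : 0 ≤ δ) (hp : 0 ≤ p) :
    ∫⁻ y in ball x (2 * r) \ ball x r,
        ENNReal.ofReal (δ ^ p) / (μ (ball x (dist x y)) * ENNReal.ofReal (dist x y ^ p)) ∂μ ≤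
      ENNReal.ofReal (C * (δ / r) ^ p) := by
  set k := ENNReal.ofReal ((δ / r) ^ p)
  have hpt : ∀ y ∈ ball x (2 * r) \ ball x r,
      ENNReal.ofReal (δ ^ p) / (μ (ball x (dist x y)) * ENNReal.ofReal (dist x y ^ p)) ≤
        k / μ (ball x r) := by
    rintro y ⟨-, hy⟩
    rw [mem_ball, not_lt, dist_comm] at hy
    calc ENNReal.ofReal (δ ^ p) / (μ (ball x (dist x y)) * ENNReal.ofReal (dist x y ^ p))
        ≤ ENNReal.ofReal (δ ^ p) / (μ (ball x r) * ENNReal.ofReal (r ^ p)) := by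
          gcongr ENNReal.ofReal (δ ^ p) / (μ ?_ * ENNReal.ofReal ?_)
          · exact ball_subset_ball hy
          · exact Real.rpow_le_rpow hr.le hy hp
      _ = k / μ (ball x r) := by
          have hrp : ENNReal.ofReal (r ^ p) ≠ 0 := (ENNReal.ofReal_pos.2 (by positivity)).ne'
          rw [mul_comm, div_eq_mul_inv, ENNReal.mul_inv (.inl hrp) (.inl ENNReal.ofReal_ne_top),
            ← mul_assoc, ← div_eq_mul_inv, ← div_eq_mul_inv,
            ← ENNReal.ofReal_div_of_pos (by positivity), ← Real.div_rpow hδ hr.le]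
  calc _ ≤ ∫⁻ _ in ball x (2 * r) \ ball x r, k / μ (ball x r) ∂μ :=
        setLIntegral_mono' (measurableSet_ball.diff measurableSet_ball) hpt
    _ = k / μ (ball x r) * μ (ball x (2 * r) \ ball x r) := setLIntegral_const _ _
    _ ≤ k / μ (ball x r) * (C * μ (ball x r)) := by
        gcongr
        exact (measure_mono sdiff_subset).trans (hμ x r hr)
    _ = C * (μ (ball x r) * (k / μ (ball x r))) := by ring
    -- `b * (k / b) ≤ k` also holds in the degenerate cases `b = 0` and `b = ∞`.
    _ ≤ C * k := by gcongr; exact ENNReal.mul_div_le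
    _ = ENNReal.ofReal (C * (δ / r) ^ p) := by
        rw [ENNReal.ofReal_mul C.coe_nonneg, ENNReal.ofReal_coe_nnreal]

end IsUniformlyDoubling

theorem lintegral_indicator_le_const_general {X : Type*} [MetricSpace X] [MeasurableSpace X]
    [BorelSpace X] (μ : Measure X)
    (CD : ℝ≥0) (hCD : 0 < CD) (hdoub : IsUniformlyDoubling μ CD)
    (p : ℝ) (hp : 1 < p) (f : X → ℝ) (hf : LipschitzWith 1 f) :
    ∃ C > (0 : ℝ), ∀ δ : ℝ, 0 < δ → ∀ x : X,
      ∫⁻ y, Set.indicator {y | |f x - f y| > δ}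
          (fun y => ENNReal.ofReal (δ ^ p) /
            (μ (ball x (dist x y)) * ENNReal.ofReal (dist x y ^ p))) y ∂μ ≤
        ENNReal.ofReal C := by
  set a : ℝ := (2⁻¹ : ℝ) ^ p
  have ha0 : 0 ≤ a := by positivity
  have ha1 : a < 1 := Real.rpow_lt_one (by norm_num) (by norm_num) (by linarith)
  refine ⟨CD * (1 - a)⁻¹, mul_pos hCD (inv_pos.2 (sub_pos.2 ha1)), fun δ hδ x => ?_⟩
  have hfar : {y | |f x - f y| > δ} ⊆ (ball x δ)ᶜ := fun y hy => by
    rw [mem_compl_iff, mem_ball, not_lt, dist_comm]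
    exact hy.le.trans (by simpa [Real.dist_eq] using hf.dist_le_mul x y)
  have hratio : ∀ n : ℕ, (δ / (2 ^ n * δ)) ^ p = a ^ n := fun n => by
    rw [div_mul_cancel_right₀ hδ.ne', ← inv_pow, Real.rpow_pow_comm (by norm_num)]
  calc _ ≤ ∫⁻ y in (ball x δ)ᶜ, ENNReal.ofReal (δ ^ p) /
            (μ (ball x (dist x y)) * ENNReal.ofReal (dist x y ^ p)) ∂μ :=
        (lintegral_indicator_le _ _).trans (lintegral_mono_set hfar)
    _ ≤ ∑' n : ℕ, ∫⁻ y in ball x (2 ^ (n + 1) * δ) \ ball x (2 ^ n * δ),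
          ENNReal.ofReal (δ ^ p) /
            (μ (ball x (dist x y)) * ENNReal.ofReal (dist x y ^ p)) ∂μ :=
        (lintegral_mono_set (compl_ball_subset_iUnion_annulus x hδ one_lt_two)).trans
          (lintegral_iUnion_le _ _)
    _ ≤ ∑' n : ℕ, ENNReal.ofReal (CD * a ^ n) := ENNReal.tsum_le_tsum fun n => by
        rw [← hratio, pow_succ', mul_assoc]
        exact hdoub.setLIntegral_annulus_le x (by positivity) hδ.le (by linarith)
    _ = ENNReal.ofReal (CD * (1 - a)⁻¹) := by
        rw [← ENNReal.ofReal_tsum_of_nonneg (fun n => by positivity)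
          ((summable_geometric_of_lt_one ha0 ha1).mul_left _), tsum_mul_left,
          tsum_geometric_of_lt_one ha0 ha1]

/-- Let `(X,d,m)` be a metric measure space whose measure is uniformly
doubling with constant `C_D`, `p ∈ (1,∞)`, and `f : X → ℝ` `1`-Lipschitz. Then there is
`C > 0` such that for every `δ > 0` and every `x ∈ X`:
`∫_X 1_{|f(x)-f(y)|>δ}(y) δ^p/(μ(B_{d(x,y)}(x)) d(x,y)^p) dμ(y) ≤ C`. -/
theorem lintegral_indicator_le_const {X : Type*} [MetricSpace X] [CompleteSpace X]
    [TopologicalSpace.SeparableSpace X] [MeasurableSpace X] [BorelSpace X]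
    (μ : Measure X) (hμ : μ ≠ 0) (hballs : ∀ (x : X) (r : ℝ), μ (ball x r) < ∞)
    (CD : ℝ≥0) (hCD : 0 < CD) (hdoub : IsUniformlyDoubling μ CD)
    (p : ℝ) (hp : 1 < p) (f : X → ℝ) (hf : LipschitzWith 1 f) :
    ∃ C > (0 : ℝ), ∀ δ : ℝ, 0 < δ → ∀ x : X,
      ∫⁻ y, Set.indicator {y | |f x - f y| > δ}
          (fun y => ENNReal.ofReal (δ ^ p) /
            (μ (ball x (dist x y)) * ENNReal.ofReal (dist x y ^ p))) y ∂μ ≤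
        ENNReal.ofReal C :=
  lintegral_indicator_le_const_general μ CD hCD hdoub p hp f hf
end

section
/- Let (X,d,m) be a metric measure space whose measure m is uniformly doubling with constant C_D, let p ∈ (1,∞), and let f : X → ℝ be Lipschitz with Lipschitz constant at most 1 and with support contained in a ball B_{r̄}(x̄). Then there exists a constant C > 0 (depending only on C_D and p) such that for every δ > 0: ∫_{X∖B_{r̄+1}(x̄)} ∫_X 1_{{|f(x)−f(y)|>δ}}(y) · δ^p / (m(B_{d(x,y)}(x))·d(x,y)^p) dm(y) dm(x) ≤ C·δ^p·m(B_{r̄}(x̄)). -/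
/-!
For `x` outside `B_{r̄+1}(x̄)` we have `f x = 0`, so only points `y ∈ B_r̄(x̄)` contribute to the
inner integral, and for those `d(x,y) ≥ s(x) := d(x,x̄) - r̄ ≥ 1`. Hence the inner integral is at
most `δ^p m(B_r̄(x̄)) / (m(B_{s(x)}(x)) s(x)^p)`, and it remains to see that this weight is
integrable in `x`. On the dyadic shell `{2^k ≤ s < 2^(k+1)}`, which lies in `B_{2^n 2^k}(x)` for
each of its points `x` once `2^n ≥ 2|r̄| + 4`, doubling gives `m(shell) ≤ C_D^n m(B_{2^k}(x))`, so
the shell contributes at most `C_D^n 2^(-kp)`: a geometric series since `p > 0`.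
-/

open MeasureTheory Metric Filter Set
open scoped ENNReal Topology NNReal

namespace IsUniformlyDoubling

variable {X : Type*} [MetricSpace X] [MeasurableSpace X] {μ : Measure X} {C : ℝ≥0}

theorem measure_ball_two_pow_mul_le (hμ : IsUniformlyDoubling μ C) (x : X) {r : ℝ}
    (hr : 0 < r) (n : ℕ) : μ (ball x (2 ^ n * r)) ≤ C ^ n * μ (ball x r) := by
  induction n with
  | zero => simp
  | succ n ih =>
    calc μ (ball x (2 ^ (n + 1) * r)) = μ (ball x (2 * (2 ^ n * r))) := by ring_nf
      _ ≤ C * μ (ball x (2 ^ n * r)) := hμ x _ (by positivity)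
      _ ≤ C * (C ^ n * μ (ball x r)) := by gcongr
      _ = C ^ (n + 1) * μ (ball x r) := by ring

end IsUniformlyDoubling

theorem MeasureTheory.setLIntegral_inv_le_of_measure_le_mul {α : Type*} [MeasurableSpace α]
    {μ : Measure α} {s : Set α} (hs : MeasurableSet s) {g : α → ℝ≥0∞} {c : ℝ≥0∞}
    (h : ∀ x ∈ s, μ s ≤ c * g x) : ∫⁻ x in s, (g x)⁻¹ ∂μ ≤ c := by
  rcases eq_or_ne (μ s) 0 with hs0 | hs0
  · simp [setLIntegral_measure_zero _ _ hs0]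
  rcases eq_or_ne c ∞ with rfl | hc
  · exact le_top
  have hg : ∀ x ∈ s, (g x)⁻¹ ≤ c / μ s := fun x hx => by
    rw [ENNReal.le_div_iff_mul_le (.inl hs0) (.inr hc)]
    calc (g x)⁻¹ * μ s ≤ (g x)⁻¹ * (c * g x) := by gcongr; exact h x hx
      _ = c * ((g x)⁻¹ * g x) := by ring
      _ ≤ c := mul_le_of_le_one_right' (ENNReal.inv_mul_le_one _)
  calc ∫⁻ x in s, (g x)⁻¹ ∂μ ≤ ∫⁻ _ in s, c / μ s ∂μ := setLIntegral_mono' hs hg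
    _ = μ s * (c / μ s) := by rw [setLIntegral_const, mul_comm]
    _ ≤ c := ENNReal.mul_div_le

section DyadicShell

variable {X : Type*} [MetricSpace X]

def dyadicShell (x₀ : X) (R : ℝ) (k : ℕ) : Set X :=
  {x | 2 ^ k ≤ dist x x₀ - R ∧ dist x x₀ - R < 2 ^ (k + 1)}

theorem measurableSet_dyadicShell [MeasurableSpace X] [OpensMeasurableSpace X] (x₀ : X) (R : ℝ)
    (k : ℕ) : MeasurableSet (dyadicShell x₀ R k) := by
  have h : Measurable fun x => dist x x₀ - R := ((continuous_id.dist continuous_const).sub continuous_const).measurable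
  exact (measurableSet_le measurable_const h).inter (measurableSet_lt h measurable_const)

theorem compl_ball_subset_iUnion_dyadicShell (x₀ : X) (R : ℝ) :
    (ball x₀ (R + 1))ᶜ ⊆ ⋃ k, dyadicShell x₀ R k := by
  intro x hx
  have h1 : 1 ≤ dist x x₀ - R := by
    rw [mem_compl_iff, mem_ball, not_lt] at hx
    linarith
  exact mem_iUnion.2 (exists_nat_pow_near h1 one_lt_two)

theorem dyadicShell_subset_ball {x₀ x : X} {R : ℝ} {n k : ℕ} (hn : 2 * |R| + 4 ≤ 2 ^ n)
    (hx : x ∈ dyadicShell x₀ R k) : dyadicShell x₀ R k ⊆ ball x (2 ^ n * 2 ^ k) := by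
  intro z hz
  have hk : (1 : ℝ) ≤ 2 ^ k := one_le_pow₀ one_le_two
  calc dist z x ≤ dist z x₀ + dist x x₀ := dist_triangle_right z x x₀
    _ < 2 * R + 4 * 2 ^ k := by linarith [hz.2, hx.2, pow_succ (2 : ℝ) k]
    _ ≤ (2 * |R| + 4) * 2 ^ k := by nlinarith [le_abs_self R, abs_nonneg R]
    _ ≤ 2 ^ n * 2 ^ k := by gcongr

end DyadicShell

namespace IsUniformlyDoubling

variable {X : Type*} [MetricSpace X] [MeasurableSpace X] {μ : Measure X} {C : ℝ≥0}

theorem measure_dyadicShell_le_mul (hμ : IsUniformlyDoubling μ C) {x₀ x : X} {R p : ℝ}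
    (hp : 0 ≤ p) {n k : ℕ} (hn : 2 * |R| + 4 ≤ 2 ^ n) (hx : x ∈ dyadicShell x₀ R k) :
    μ (dyadicShell x₀ R k) ≤ (C ^ n * (ENNReal.ofReal (2 ^ p))⁻¹ ^ k) *
      (μ (ball x (dist x x₀ - R)) * ENNReal.ofReal ((dist x x₀ - R) ^ p)) := by
  have h2k : (0 : ℝ) < 2 ^ k := by positivity
  have hpow : ENNReal.ofReal (2 ^ p) ^ k = ENNReal.ofReal ((2 ^ k) ^ p) := by
    rw [← ENNReal.ofReal_pow (by positivity), Real.rpow_pow_comm zero_le_two]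
  have hcancel : (ENNReal.ofReal (2 ^ p))⁻¹ ^ k * ENNReal.ofReal (2 ^ p) ^ k = 1 := by
    rw [← ENNReal.inv_pow]
    exact ENNReal.inv_mul_cancel (by simp [ENNReal.ofReal_eq_zero, Real.rpow_pos_of_pos]) (by simp)
  calc μ (dyadicShell x₀ R k) ≤ μ (ball x (2 ^ n * 2 ^ k)) :=
        measure_mono (dyadicShell_subset_ball hn hx)
    _ ≤ C ^ n * μ (ball x (2 ^ k)) := hμ.measure_ball_two_pow_mul_le x h2k n
    _ = (C ^ n * (ENNReal.ofReal (2 ^ p))⁻¹ ^ k) *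
          (μ (ball x (2 ^ k)) * ENNReal.ofReal ((2 ^ k) ^ p)) := by
        rw [← hpow, mul_mul_mul_comm, hcancel, mul_one]
    _ ≤ _ := by
        gcongr
        · exact hx.1
        · exact hx.1

theorem setLIntegral_dyadicShell_le [OpensMeasurableSpace X] (hμ : IsUniformlyDoubling μ C)
    (x₀ : X) {R p : ℝ} (hp : 0 ≤ p) {n : ℕ} (hn : 2 * |R| + 4 ≤ 2 ^ n) (k : ℕ) :
    ∫⁻ x in dyadicShell x₀ R k,
        (μ (ball x (dist x x₀ - R)) * ENNReal.ofReal ((dist x x₀ - R) ^ p))⁻¹ ∂μ ≤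
      C ^ n * (ENNReal.ofReal (2 ^ p))⁻¹ ^ k :=
  setLIntegral_inv_le_of_measure_le_mul (measurableSet_dyadicShell x₀ R k)
    fun _ hx => hμ.measure_dyadicShell_le_mul hp hn hx

theorem setLIntegral_compl_ball_inv_measure_ball_mul_rpow_lt_top [OpensMeasurableSpace X]
    (hμ : IsUniformlyDoubling μ C) (x₀ : X) (R : ℝ) {p : ℝ} (hp : 0 < p) :
    ∫⁻ x in (ball x₀ (R + 1))ᶜ,
        (μ (ball x (dist x x₀ - R)) * ENNReal.ofReal ((dist x x₀ - R) ^ p))⁻¹ ∂μ < ∞ := by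
  obtain ⟨n, hn⟩ := pow_unbounded_of_one_lt (2 * |R| + 4) one_lt_two
  have hratio : (ENNReal.ofReal (2 ^ p))⁻¹ < 1 := by
    rw [ENNReal.inv_lt_one, ENNReal.one_lt_ofReal]
    exact Real.one_lt_rpow one_lt_two hp
  calc _ ≤ ∫⁻ x in ⋃ k, dyadicShell x₀ R k,
          (μ (ball x (dist x x₀ - R)) * ENNReal.ofReal ((dist x x₀ - R) ^ p))⁻¹ ∂μ :=
        lintegral_mono_set (compl_ball_subset_iUnion_dyadicShell x₀ R)
    _ ≤ ∑' k, C ^ n * (ENNReal.ofReal (2 ^ p))⁻¹ ^ k :=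
        (lintegral_iUnion_le _ _).trans
          (ENNReal.tsum_le_tsum (hμ.setLIntegral_dyadicShell_le x₀ hp.le hn.le))
    _ = C ^ n * (1 - (ENNReal.ofReal (2 ^ p))⁻¹)⁻¹ := by
        rw [ENNReal.tsum_mul_left, ENNReal.tsum_geometric]
    _ < ∞ := by
        have : 1 - (ENNReal.ofReal (2 ^ p))⁻¹ ≠ 0 := (tsub_pos_of_lt hratio).ne'
        finiteness

end IsUniformlyDoubling

theorem lintegral_indicator_abs_sub_gt_le {X : Type*} [MetricSpace X] [MeasurableSpace X]
    [OpensMeasurableSpace X] (μ : Measure X) {f : X → ℝ} {x₀ x : X} {R δ p : ℝ}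
    (hsupp : Function.support f ⊆ ball x₀ R) (hx : x ∉ ball x₀ R) (hδ : 0 ≤ δ) (hp : 0 ≤ p) :
    ∫⁻ y, Set.indicator {y | |f x - f y| > δ}
        (fun y => ENNReal.ofReal (δ ^ p) /
          (μ (ball x (dist x y)) * ENNReal.ofReal (dist x y ^ p))) y ∂μ ≤
      ENNReal.ofReal (δ ^ p) * μ (ball x₀ R) *
        (μ (ball x (dist x x₀ - R)) * ENNReal.ofReal ((dist x x₀ - R) ^ p))⁻¹ := by
  have hfx : f x = 0 := Function.notMem_support.1 fun h => hx (hsupp h)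
  have hjump : {y | |f x - f y| > δ} ⊆ ball x₀ R := fun y hy => hsupp fun hy0 => by
    simp only [mem_ofPred_eq, hfx, hy0, sub_zero, abs_zero] at hy
    linarith
  have hR : 0 ≤ dist x x₀ - R := by
    rw [mem_ball, not_lt] at hx
    linarith
  have hkernel : ∀ y ∈ ball x₀ R,
      ENNReal.ofReal (δ ^ p) / (μ (ball x (dist x y)) * ENNReal.ofReal (dist x y ^ p)) ≤
        ENNReal.ofReal (δ ^ p) *
          (μ (ball x (dist x x₀ - R)) * ENNReal.ofReal ((dist x x₀ - R) ^ p))⁻¹ := by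
    intro y hy
    have hxy : dist x x₀ - R ≤ dist x y := by
      linarith [mem_ball.1 hy, dist_triangle x y x₀]
    rw [div_eq_mul_inv]
    gcongr
  calc _ ≤ ∫⁻ y, (ball x₀ R).indicator (fun _ => ENNReal.ofReal (δ ^ p) *
          (μ (ball x (dist x x₀ - R)) * ENNReal.ofReal ((dist x x₀ - R) ^ p))⁻¹) y ∂μ := by
        refine lintegral_mono fun y => ?_
        by_cases hy : y ∈ {y | |f x - f y| > δ}
        · rw [indicator_of_mem hy, indicator_of_mem (hjump hy)]
          exact hkernel y (hjump hy)
        · rw [indicator_of_notMem hy]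
          exact zero_le
    _ = _ := by rw [lintegral_indicator_const measurableSet_ball, mul_right_comm]

theorem lintegral_lintegral_compl_ball_le_general {X : Type*} [MetricSpace X]
    [MeasurableSpace X] [BorelSpace X] (μ : Measure X)
    (CD : ℝ≥0) (hdoub : IsUniformlyDoubling μ CD) (p : ℝ) (hp : 1 < p) (f : X → ℝ)
    (xbar : X) (rbar : ℝ) (hsupp : Function.support f ⊆ ball xbar rbar) :
    ∃ C > (0 : ℝ), ∀ δ : ℝ, 0 < δ →
      ∫⁻ x in (ball xbar (rbar + 1))ᶜ, ∫⁻ y, Set.indicator {y | |f x - f y| > δ}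
          (fun y => ENNReal.ofReal (δ ^ p) /
            (μ (ball x (dist x y)) * ENNReal.ofReal (dist x y ^ p))) y ∂μ ∂μ ≤
        ENNReal.ofReal (C * δ ^ p) * μ (ball xbar rbar) := by
  set K := ∫⁻ x in (ball xbar (rbar + 1))ᶜ,
    (μ (ball x (dist x xbar - rbar)) * ENNReal.ofReal ((dist x xbar - rbar) ^ p))⁻¹ ∂μ
  have hK : K < ∞ :=
    hdoub.setLIntegral_compl_ball_inv_measure_ball_mul_rpow_lt_top xbar rbar (zero_lt_one.trans hp)
  refine ⟨K.toReal + 1, by positivity, fun δ hδ => ?_⟩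
  rcases eq_or_ne (μ (ball xbar rbar)) ∞ with hB | hB
  · rw [hB, ENNReal.mul_top (by positivity)]
    exact le_top
  calc _ ≤ ∫⁻ x in (ball xbar (rbar + 1))ᶜ, ENNReal.ofReal (δ ^ p) * μ (ball xbar rbar) *
          (μ (ball x (dist x xbar - rbar)) * ENNReal.ofReal ((dist x xbar - rbar) ^ p))⁻¹ ∂μ :=
        setLIntegral_mono' measurableSet_ball.compl fun x hx =>
          lintegral_indicator_abs_sub_gt_le μ hsupp
            (fun hx' => hx (ball_subset_ball (by linarith) hx')) hδ.le (by linarith)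
    _ = ENNReal.ofReal (δ ^ p) * μ (ball xbar rbar) * K := lintegral_const_mul' _ _ (by finiteness)
    _ ≤ ENNReal.ofReal (δ ^ p) * μ (ball xbar rbar) * ENNReal.ofReal (K.toReal + 1) := by
        gcongr
        rw [ENNReal.le_ofReal_iff_toReal_le hK.ne (by positivity)]
        linarith
    _ = ENNReal.ofReal ((K.toReal + 1) * δ ^ p) * μ (ball xbar rbar) := by
        rw [ENNReal.ofReal_mul (by positivity)]
        ring

/-- Let `(X,d,m)` be a metric measure space whose measure is uniformly
doubling with constant `C_D`, `p ∈ (1,∞)`, and `f : X → ℝ` `1`-Lipschitz with support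
contained in a ball `B_r̄(x̄)`. Then there is `C > 0` such that for every `δ > 0`:
`∫_{X∖B_{r̄+1}(x̄)} ∫_X 1_{|f(x)-f(y)|>δ}(y) δ^p/(μ(B_{d(x,y)}(x)) d(x,y)^p) dμ(y) dμ(x)
  ≤ C δ^p μ(B_r̄(x̄))`. -/
theorem lintegral_lintegral_compl_ball_le {X : Type*} [MetricSpace X] [CompleteSpace X]
    [TopologicalSpace.SeparableSpace X] [MeasurableSpace X] [BorelSpace X]
    (μ : Measure X) (hμ : μ ≠ 0) (hballs : ∀ (x : X) (r : ℝ), μ (ball x r) < ∞)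
    (CD : ℝ≥0) (hCD : 0 < CD) (hdoub : IsUniformlyDoubling μ CD)
    (p : ℝ) (hp : 1 < p) (f : X → ℝ) (hf : LipschitzWith 1 f)
    (xbar : X) (rbar : ℝ) (hsupp : Function.support f ⊆ ball xbar rbar) :
    ∃ C > (0 : ℝ), ∀ δ : ℝ, 0 < δ →
      ∫⁻ x in (ball xbar (rbar + 1))ᶜ, ∫⁻ y, Set.indicator {y | |f x - f y| > δ}
          (fun y => ENNReal.ofReal (δ ^ p) /
            (μ (ball x (dist x y)) * ENNReal.ofReal (dist x y ^ p))) y ∂μ ∂μ ≤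
        ENNReal.ofReal (C * δ ^ p) * μ (ball xbar rbar) :=
  lintegral_lintegral_compl_ball_le_general μ CD hdoub p hp f xbar rbar hsupp
end
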